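/- arXiv:1606.00502 — 2 statements merged into one kernel-verified Lean document; each statement's English description precedes it below -/
import Mathlib

section
/- Let R be a specification on a set S, let P be a relation on S that is correct with respect to R, and let P' be a deterministic relation on S that is more-correct than P with respect to R. Then P' is correct with respect to R. -/
/-! Correctness of `P` means `P` is defined on `dom R` with outputs allowed by `R` there, so
`dom R ⊆ dom (R ∩ P)`; more-correctness passes this to `P'`. On `dom R` the deterministic `P'`
then has exactly one output, and it is one that `R` allows. -/

/-- The domain of a relation on `S`. -/
def dom {S : Type*} (R : Set (S × S)) : Set S := {s | ∃ s', (s, s') ∈ R}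

/-- `refines R' R`: the relation `R'` refines the relation `R`. -/
def refines {S : Type*} (R' R : Set (S × S)) : Prop :=
  (dom R ×ˢ (Set.univ : Set S)) ∩ (dom R' ×ˢ (Set.univ : Set S)) ∩ (R ∪ R') = R

/-- A relation is deterministic (a function). -/
def deterministic {S : Type*} (P : Set (S × S)) : Prop :=
  ∀ s s' s'', (s, s') ∈ P → (s, s'') ∈ P → s' = s''

section Refinement

variable {S : Type*}

theorem dom_mono {R₁ R₂ : Set (S × S)} (h : R₁ ⊆ R₂) : dom R₁ ⊆ dom R₂ :=
  fun _ ⟨t, ht⟩ => ⟨t, h ht⟩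

theorem refines_iff {R' R : Set (S × S)} :
    refines R' R ↔ dom R ⊆ dom R' ∧ ∀ s t, s ∈ dom R → (s, t) ∈ R' → (s, t) ∈ R := by
  unfold refines
  constructor
  · intro h
    refine ⟨fun s ⟨t, hst⟩ => ?_, fun s t hs hst => ?_⟩
    · rw [← h] at hst
      exact hst.1.2.1
    · rw [← h]
      exact ⟨⟨⟨hs, trivial⟩, ⟨t, hst⟩, trivial⟩, Or.inr hst⟩
  · rintro ⟨hdom, hsound⟩
    ext ⟨s, t⟩
    constructor
    · rintro ⟨⟨⟨hs, -⟩, -⟩, hR | hR'⟩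
      · exact hR
      · exact hsound s t hs hR'
    · intro hst
      exact ⟨⟨⟨⟨t, hst⟩, trivial⟩, hdom ⟨t, hst⟩, trivial⟩, Or.inl hst⟩

theorem refines.dom_subset_dom_inter {P R : Set (S × S)} (h : refines P R) :
    dom R ⊆ dom (R ∩ P) := by
  obtain ⟨hdom, hsound⟩ := refines_iff.mp h
  intro s hs
  obtain ⟨u, hu⟩ := hdom hs
  exact ⟨u, hsound s u hs hu, hu⟩

theorem refines_of_deterministic {P R : Set (S × S)} (hdet : deterministic P)
    (h : dom R ⊆ dom (R ∩ P)) : refines P R := by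
  refine refines_iff.mpr ⟨h.trans (dom_mono Set.inter_subset_right), fun s t hs hst => ?_⟩
  obtain ⟨u, huR, huP⟩ := h hs
  rwa [← hdet s u t huP hst]

end Refinement

/-- A deterministic program that is more-correct than a correct program is itself
correct. -/
theorem stmt_7 {S : Type*} (R P P' : Set (S × S))
    (hcorrect : refines P R) (hdet : deterministic P')
    (hmc : dom (R ∩ P) ⊆ dom (R ∩ P')) : refines P' R :=
  refines_of_deterministic hdet (hcorrect.dom_subset_dom_inter.trans hmc)
end

section
/- A program may be strictly more-correct than another without duplicating its behavior on its competence domain: there exist a set S, a specification R on S, and deterministic relations P and P' on S, such that dom(R ∩ P) is nonempty, dom(R ∩ P) ⊊ dom(R ∩ P') (P' is strictly more-correct than P with respect to R), and P ∩ P' = ∅ (P' agrees with P on no input). -/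
/-!
With the trivial specification `R = univ`, correctness is just being defined. On `Bool`, let `P`
send `false` to `false` and be undefined at `true`, and let `P'` be the constant function `true`:
`P'` is total, hence strictly more-correct than `P`, yet it disagrees with `P` at `false`.
-/

open Set

section Relations

variable {S : Type*}

theorem deterministic_singleton (a b : S) : deterministic {(a, b)} := by
  rintro s s' s'' ⟨-, rfl⟩ ⟨-, rfl⟩
  rfl

theorem deterministic_graph (f : S → S) : deterministic {p : S × S | p.2 = f p.1} := by
  rintro s s' s'' (rfl : s' = f s) (rfl : s'' = f s)
  rfl

theorem dom_singleton (a b : S) : dom {(a, b)} = {a} :=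
  Subset.antisymm (fun _ ⟨_, h⟩ => congrArg Prod.fst h) fun _ h => ⟨b, by rw [h]; rfl⟩

theorem dom_graph (f : S → S) : dom {p : S × S | p.2 = f p.1} = univ :=
  eq_univ_of_forall fun s => ⟨f s, rfl⟩

end Relations

/-- A program may be strictly more-correct than another without duplicating its
behavior on its competence domain. -/
theorem stmt_14 :
    ∃ (S : Type) (R P P' : Set (S × S)),
      deterministic P ∧ deterministic P' ∧
      (dom (R ∩ P)).Nonempty ∧
      dom (R ∩ P) ⊂ dom (R ∩ P') ∧
      P ∩ P' = ∅ := by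
  refine ⟨Bool, univ, {(false, false)}, {p | p.2 = Function.const Bool true p.1},
    deterministic_singleton _ _, deterministic_graph _, ?_, ?_, ?_⟩
  · rw [univ_inter, dom_singleton]
    exact singleton_nonempty _
  · rw [univ_inter, univ_inter, dom_singleton, dom_graph]
    exact ssubset_univ_iff.mpr (singleton_ne_univ _)
  · exact singleton_inter_eq_empty.mpr Bool.false_ne_true
end
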